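/- Let m, n ≥ 2 and x ∈ ℝ^m, y ∈ ℝ^n with x ⋆ y ≠ 0. If x(m) = 0 and y(1) = 0 (or if x(1) = 0 and y(n) = 0), then (x, y) is unidentifiable within ℝ^m × ℝ^n: there exists (x', y') ∈ ℝ^m × ℝ^n with x' ⋆ y' = x ⋆ y such that x' is not a scalar multiple of x. -/
import Mathlib


open Finset

noncomputable section

/-- Extend a `Fin d`-indexed vector to `ℕ` by zero. -/
def ext0 {d : ℕ} (u : Fin d → ℝ) : ℕ → ℝ := fun j => if h : j < d then u ⟨j, h⟩ else 0

/-- Shifted (delayed by one) extension: value at `j` is `u (j-1)`, zero at `j = 0`. -/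
def extm {d : ℕ} (u : Fin d → ℝ) : ℕ → ℝ := fun j => if j = 0 then 0 else ext0 u (j - 1)

/-- Linear convolution of `x ∈ ℝ^m` and `y ∈ ℝ^n`, a vector in `ℝ^{m+n-1}` (0-indexed). -/
def conv {m n : ℕ} (x : Fin m → ℝ) (y : Fin n → ℝ) : Fin (m + n - 1) → ℝ :=
  fun l => ∑ j : Fin m, ∑ k : Fin n, if (j : ℕ) + (k : ℕ) = (l : ℕ) then x j * y k else 0

lemma ext0_lt {d : ℕ} (u : Fin d → ℝ) {j : ℕ} (h : j < d) : ext0 u j = u ⟨j, h⟩ := dif_pos h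

lemma ext0_ge {d : ℕ} (u : Fin d → ℝ) {j : ℕ} (h : d ≤ j) : ext0 u j = 0 :=
  dif_neg (by omega)

lemma conv_as_range {m n : ℕ} (x : Fin m → ℝ) (y : Fin n → ℝ) (l : Fin (m + n - 1)) :
    conv x y l = ∑ j ∈ range ((l : ℕ) + 1), ext0 x j * ext0 y ((l : ℕ) - j) := by
  have hl : (l : ℕ) < m + n := lt_of_lt_of_le l.isLt (by omega)
  have step1 : conv x y l
      = ∑ j ∈ range m, ∑ k ∈ range n,
          if j + k = (l : ℕ) then ext0 x j * ext0 y k else 0 := by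
    rw [conv]
    rw [← Fin.sum_univ_eq_sum_range
      (fun j => ∑ k ∈ range n, if j + k = (l : ℕ) then ext0 x j * ext0 y k else 0)]
    refine Finset.sum_congr rfl fun j _ => ?_
    rw [← Fin.sum_univ_eq_sum_range
      (fun k => if (j : ℕ) + k = (l : ℕ) then ext0 x (j : ℕ) * ext0 y k else 0)]
    refine Finset.sum_congr rfl fun k _ => ?_
    rw [ext0_lt x j.isLt, ext0_lt y k.isLt]
  have step2 : conv x y l
      = ∑ j ∈ range (m + n), ∑ k ∈ range (m + n),
          if j + k = (l : ℕ) then ext0 x j * ext0 y k else 0 := by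
    rw [step1]
    rw [Finset.sum_subset (Finset.range_subset_range.2 (by omega : m ≤ m + n))]
    · refine Finset.sum_congr rfl fun j _ => ?_
      rw [Finset.sum_subset (Finset.range_subset_range.2 (by omega : n ≤ m + n))]
      intro k _ hk
      rw [ext0_ge y (by simpa using hk)]
      simp
    · intro j _ hj
      rw [ext0_ge x (by simpa using hj)]
      simp
  rw [step2]
  have step3 : ∀ j ∈ range (m + n),
      (∑ k ∈ range (m + n), if j + k = (l : ℕ) then ext0 x j * ext0 y k else 0)
      = if j ∈ range ((l : ℕ) + 1) then ext0 x j * ext0 y ((l : ℕ) - j) else 0 := by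
    intro j _
    by_cases hj : j ≤ (l : ℕ)
    · have hcond : ∀ k, (j + k = (l : ℕ)) ↔ (k = (l : ℕ) - j) := fun k => by omega
      simp_rw [hcond]
      rw [Finset.sum_ite_eq' (range (m + n)) ((l : ℕ) - j) (fun k => ext0 x j * ext0 y k)]
      rw [if_pos (Finset.mem_range.2 (by omega)), if_pos (Finset.mem_range.2 (by omega))]
    · have hc : ∀ k, ¬ (j + k = (l : ℕ)) := fun k => by omega
      simp only [hc, if_false, Finset.sum_const_zero]
      rw [if_neg (by simp [Finset.mem_range]; omega)]
  rw [Finset.sum_congr rfl step3, Finset.sum_ite_mem,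
    Finset.inter_eq_right.2 (Finset.range_subset_range.2 (by omega))]

/-- pathological cases yield unidentifiability (delay ambiguity). -/
theorem pathological_unidentifiable (m n : ℕ) (hm : 2 ≤ m) (hn : 2 ≤ n)
    (x : Fin m → ℝ) (y : Fin n → ℝ) (hxy : conv x y ≠ 0)
    (h : (ext0 x (m - 1) = 0 ∧ ext0 y 0 = 0) ∨ (ext0 x 0 = 0 ∧ ext0 y (n - 1) = 0)) :
    ∃ (x' : Fin m → ℝ) (y' : Fin n → ℝ),
      conv x' y' = conv x y ∧ ¬ ∃ α : ℝ, x' = α • x := by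
  have hx0ne : x ≠ 0 := by
    intro hx0
    apply hxy
    funext l
    simp [conv, hx0]
  rcases h with ⟨hx, hy⟩ | ⟨hx, hy⟩
  · -- case 1 : x (m-1) = 0, y 0 = 0 : delay x, advance y
    refine ⟨fun j => extm x (j : ℕ), fun k => ext0 y ((k : ℕ) + 1), ?_, ?_⟩
    · funext l
      rw [conv_as_range, conv_as_range]
      have hex : ∀ j : ℕ, ext0 (fun j : Fin m => extm x (j : ℕ)) j = extm x j := by
        intro j
        by_cases hj : j < m
        · rw [ext0_lt _ hj]
        · rw [ext0_ge _ (by omega)]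
          unfold extm
          rw [if_neg (by omega)]
          rcases Nat.lt_or_ge (j - 1) m with h3 | h3
          · have : j - 1 = m - 1 := by omega
            rw [this, hx]
          · rw [ext0_ge x h3]
      have hey : ∀ k : ℕ, ext0 (fun k : Fin n => ext0 y ((k : ℕ) + 1)) k = ext0 y (k + 1) := by
        intro k
        by_cases hk : k < n
        · rw [ext0_lt _ hk]
        · rw [ext0_ge _ (by omega), ext0_ge y (by omega)]
      simp_rw [hex, hey]
      rw [Finset.sum_range_succ' (fun j => extm x j * ext0 y ((l : ℕ) - j + 1)),
        Finset.sum_range_succ]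
      have h0 : extm x 0 * ext0 y ((l : ℕ) - 0 + 1) = 0 := by simp [extm]
      have hlast : ext0 x (l : ℕ) * ext0 y ((l : ℕ) - (l : ℕ)) = 0 := by
        simp [Nat.sub_self, hy]
      rw [h0, hlast, add_zero, add_zero]
      refine Finset.sum_congr rfl fun i hi => ?_
      rw [Finset.mem_range] at hi
      have h1 : extm x (i + 1) = ext0 x i := by simp [extm]
      have h2 : (l : ℕ) - (i + 1) + 1 = (l : ℕ) - i := by omega
      rw [h1, h2]
    · rintro ⟨α, hα⟩
      have step' : ∀ i : ℕ, i + 1 < m → ext0 x i = α * ext0 x (i + 1) := by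
        intro i hi
        have := congrFun hα ⟨i + 1, hi⟩
        simp only [Pi.smul_apply, smul_eq_mul] at this
        rw [show extm x ((⟨i + 1, hi⟩ : Fin m) : ℕ) = ext0 x i by simp [extm]] at this
        rw [this, ext0_lt x hi]
      have zero' : ∀ d i : ℕ, i + d = m - 1 → ext0 x i = 0 := by
        intro d
        induction d with
        | zero =>
          intro i hi
          have hi' : i = m - 1 := by omega
          exact hi' ▸ hx
        | succ d ih =>
          intro i hi
          rw [step' i (by omega), ih (i + 1) (by omega), mul_zero]
      apply hx0ne
      funext i
      have := zero' (m - 1 - (i : ℕ)) (i : ℕ) (by omega)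
      rw [ext0_lt x i.isLt] at this
      simpa using this
  · -- case 2 : x 0 = 0, y (n-1) = 0 : advance x, delay y
    refine ⟨fun j => ext0 x ((j : ℕ) + 1), fun k => extm y (k : ℕ), ?_, ?_⟩
    · funext l
      rw [conv_as_range, conv_as_range]
      have hex : ∀ j : ℕ, ext0 (fun j : Fin m => ext0 x ((j : ℕ) + 1)) j = ext0 x (j + 1) := by
        intro j
        by_cases hj : j < m
        · rw [ext0_lt _ hj]
        · rw [ext0_ge _ (by omega), ext0_ge x (by omega)]
      have hey : ∀ k : ℕ, ext0 (fun k : Fin n => extm y (k : ℕ)) k = extm y k := by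
        intro k
        by_cases hk : k < n
        · rw [ext0_lt _ hk]
        · rw [ext0_ge _ (by omega)]
          unfold extm
          rw [if_neg (by omega)]
          rcases Nat.lt_or_ge (k - 1) n with h3 | h3
          · have : k - 1 = n - 1 := by omega
            rw [this, hy]
          · rw [ext0_ge y h3]
      simp_rw [hex, hey]
      rw [Finset.sum_range_succ, Finset.sum_range_succ'
        (fun j => ext0 x j * ext0 y ((l : ℕ) - j))]
      have h0 : ext0 x ((l : ℕ) + 1) * extm y ((l : ℕ) - (l : ℕ)) = 0 := by
        simp [Nat.sub_self, extm]
      have hfirst : ext0 x 0 * ext0 y ((l : ℕ) - 0) = 0 := by simp [hx]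
      rw [h0, hfirst, add_zero, add_zero]
      refine Finset.sum_congr rfl fun i hi => ?_
      rw [Finset.mem_range] at hi
      have h1 : extm y ((l : ℕ) - i) = ext0 y ((l : ℕ) - (i + 1)) := by
        unfold extm
        rw [if_neg (by omega), Nat.sub_sub]
      rw [h1]
    · rintro ⟨α, hα⟩
      have step' : ∀ i : ℕ, i < m → ext0 x (i + 1) = α * ext0 x i := by
        intro i hi
        have := congrFun hα ⟨i, hi⟩
        simp only [Pi.smul_apply, smul_eq_mul] at this
        rw [this, ext0_lt x hi]
      have zero' : ∀ i : ℕ, ext0 x i = 0 := by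
        intro i
        induction i with
        | zero => exact hx
        | succ i ih =>
          by_cases hi : i < m
          · rw [step' i hi, ih, mul_zero]
          · exact ext0_ge x (by omega)
      apply hx0ne
      funext i
      have := zero' (i : ℕ)
      rw [ext0_lt x i.isLt] at this
      simpa using this
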